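/- With the setup below, there exists R₀ < ∞ depending only on d such that for all R ≥ max(R₀, 2·max_{3≤i≤d}|p_i|), all integers m, n ≥ 1 and all i, j ∈ {1, …, d−4} with (m, i) ≠ (n, j), the sets of lines ℒ_{B^i_{R^m}} ∩ ℒ_{B^{i+1}_{R^m}} and ℒ_{B^j_{R^n}} ∩ ℒ_{B^{j+1}_{R^n}} are disjoint; in particular no line of ℝ^d intersects all four boxes B^i_{R^m}, B^{i+1}_{R^m}, B^j_{R^n}, B^{j+1}_{R^n}. -/

import Mathlib

open MeasureTheory
open scoped ENNReal

noncomputable section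

/-- A line in `ℝ^d`: a set of the form `{a + t • v : t ∈ ℝ}` with `v ≠ 0`. -/
def IsLine {d : ℕ} (L : Set (EuclideanSpace ℝ (Fin d))) : Prop :=
  ∃ a v : EuclideanSpace ℝ (Fin d), v ≠ 0 ∧ L = {x | ∃ t : ℝ, x = a + t • v}

/-- The standard basis vector of `ℝ^d` with a `1` in (0-indexed) coordinate `i`
(junk value `0` if `i ≥ d`). -/
def stdv (d i : ℕ) : EuclideanSpace ℝ (Fin d) :=
  if h : i < d then EuclideanSpace.single (⟨i, h⟩ : Fin d) 1 else 0

/-- The (0-indexed) `i`-th coordinate of a vector (junk value `0` if `i ≥ d`). -/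
def coordNat {d : ℕ} (x : EuclideanSpace ℝ (Fin d)) (i : ℕ) : ℝ :=
  if h : i < d then x ⟨i, h⟩ else 0

/-- The cylinder of radius `r` around a set `L`. -/
def cylinder {d : ℕ} (L : Set (EuclideanSpace ℝ (Fin d))) (r : ℝ) :
    Set (EuclideanSpace ℝ (Fin d)) :=
  {x | Metric.infDist x L ≤ r}

/-- The line `L₁ = {t • e₁ : t ∈ ℝ}`. -/
def lineOne (d : ℕ) : Set (EuclideanSpace ℝ (Fin d)) := {x | ∃ t : ℝ, x = t • stdv d 0}

/-- The cylinder `𝔠₁` of radius `√d` around `L₁`. -/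
def cylOne (d : ℕ) : Set (EuclideanSpace ℝ (Fin d)) := cylinder (lineOne d) (Real.sqrt d)

/-- The piece `𝔠_{1,m} = {x ∈ 𝔠₁ : R^{m-1}/2 ≤ |x₁| < R^m/2 - 10√d}`. -/
def cylOnePiece (d : ℕ) (R : ℝ) (m : ℕ) : Set (EuclideanSpace ℝ (Fin d)) :=
  {x ∈ cylOne d | R ^ (m - 1) / 2 ≤ |coordNat x 0| ∧
    |coordNat x 0| < R ^ m / 2 - 10 * Real.sqrt d}

/-- The direction vector `(l₁, l₂, 0, …, 0)` of the line `L₂`. -/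
def dirTwo (d : ℕ) (l1 l2 : ℝ) : EuclideanSpace ℝ (Fin d) := l1 • stdv d 0 + l2 • stdv d 1

/-- The line `L₂ = {p + t • (l₁, l₂, 0, …, 0) : t ∈ ℝ}`. -/
def lineTwo (d : ℕ) (p : EuclideanSpace ℝ (Fin d)) (l1 l2 : ℝ) :
    Set (EuclideanSpace ℝ (Fin d)) :=
  {x | ∃ t : ℝ, x = p + t • dirTwo d l1 l2}

/-- The cylinder `𝔠₂` of radius `√d` around `L₂`. -/
def cylTwo (d : ℕ) (p : EuclideanSpace ℝ (Fin d)) (l1 l2 : ℝ) :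
    Set (EuclideanSpace ℝ (Fin d)) :=
  cylinder (lineTwo d p l1 l2) (Real.sqrt d)

/-- Orthogonal projection onto the affine line `L₂` (valid when `(l₁,l₂)` is a unit vector). -/
def projLineTwo (d : ℕ) (p : EuclideanSpace ℝ (Fin d)) (l1 l2 : ℝ)
    (x : EuclideanSpace ℝ (Fin d)) : EuclideanSpace ℝ (Fin d) :=
  p + (inner ℝ (x - p) (dirTwo d l1 l2) : ℝ) • dirTwo d l1 l2

/-- The piece `𝔠_{2,m} = {x ∈ 𝔠₂ : R^{m-1}/2 ≤ |Π_{L₂}(x) - p| < R^m/2 - 10√d}`. -/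
def cylTwoPiece (d : ℕ) (p : EuclideanSpace ℝ (Fin d)) (l1 l2 R : ℝ) (m : ℕ) :
    Set (EuclideanSpace ℝ (Fin d)) :=
  {x ∈ cylTwo d p l1 l2 | R ^ (m - 1) / 2 ≤ dist (projLineTwo d p l1 l2 x) p ∧
    dist (projLineTwo d p l1 l2 x) p < R ^ m / 2 - 10 * Real.sqrt d}

/-- The point `q_{i,m} = p + N·R^m·e_{i+3}` (`i` is 1-based), where `N = 10d + 1`. -/
def qpt (d : ℕ) (p : EuclideanSpace ℝ (Fin d)) (R : ℝ) (m i : ℕ) :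
    EuclideanSpace ℝ (Fin d) :=
  p + ((10 * d + 1 : ℝ) * R ^ m) • stdv d (i + 2)

/-- The box `B^i_{R^m} = q_{i,m} + [-R^m/2, R^m/2]^d` (`i` is 1-based). -/
def bigBox (d : ℕ) (p : EuclideanSpace ℝ (Fin d)) (R : ℝ) (m i : ℕ) :
    Set (EuclideanSpace ℝ (Fin d)) :=
  {x | ∀ j : Fin d, |x j - qpt d p R m i j| ≤ R ^ m / 2}

/-- A line `L` meets both sets `S` and `T`, i.e. `L ∈ ℒ_S ∩ ℒ_T`. -/
def meets {d : ℕ} (L S T : Set (EuclideanSpace ℝ (Fin d))) : Prop :=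
  (L ∩ S).Nonempty ∧ (L ∩ T).Nonempty

/-!
Points `a, b` of a line and `c, e` of the same line satisfy
`(a - b)_k (c - e)_{k'} = (a - b)_{k'} (c - e)_k`. The boxes have side `R^m` and sit at distance
`(10d + 1) R^m` from `p` along `e_{i+3}`, so a chord from `B^i_{R^m}` to `B^{i+1}_{R^m}` has its
coordinates `i+3, i+4` of size about `10d R^m` and all others at most `R^m`. If `i ≠ j`, some
coordinate is long for one chord and short for the other, and vice versa, which the identity
forbids. If `i = j` and `m ≠ n`, use instead the chords from `B^i_{R^m}` to `B^i_{R^n}` and from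
`B^{i+1}_{R^m}` to `B^{i+1}_{R^n}`: since `|R^m - R^n| ≥ R^{max m n} / 2` for `R ≥ 2`, the first is
long only in coordinate `i+3` and the second only in coordinate `i+4`.
-/

theorem IsLine.sub_mul_sub_eq {d : ℕ} {L : Set (EuclideanSpace ℝ (Fin d))} (hL : IsLine L)
    {a b c e : EuclideanSpace ℝ (Fin d)} (ha : a ∈ L) (hb : b ∈ L) (hc : c ∈ L) (he : e ∈ L)
    (k k' : Fin d) : (a k - b k) * (c k' - e k') = (a k' - b k') * (c k - e k) := by
  obtain ⟨x, v, -, rfl⟩ := hL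
  obtain ⟨ta, rfl⟩ := ha
  obtain ⟨tb, rfl⟩ := hb
  obtain ⟨tc, rfl⟩ := hc
  obtain ⟨te, rfl⟩ := he
  simp only [PiLp.add_apply, PiLp.smul_apply, smul_eq_mul]
  ring

theorem IsLine.mul_le_mul_of_abs_sub {d : ℕ} {L : Set (EuclideanSpace ℝ (Fin d))} (hL : IsLine L)
    {a b c e : EuclideanSpace ℝ (Fin d)} (ha : a ∈ L) (hb : b ∈ L) (hc : c ∈ L) (he : e ∈ L)
    {k k' : Fin d} {A B C D : ℝ} (hA : A ≤ |a k - b k|) (hB : |a k' - b k'| ≤ B)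
    (hC : |c k - e k| ≤ C) (hD : D ≤ |c k' - e k'|) (hD₀ : 0 ≤ D) : A * D ≤ B * C :=
  calc A * D ≤ |a k - b k| * |c k' - e k'| := mul_le_mul hA hD hD₀ (abs_nonneg _)
    _ = |a k' - b k'| * |c k - e k| := by
      rw [← abs_mul, ← abs_mul, hL.sub_mul_sub_eq ha hb hc he]
    _ ≤ B * C := mul_le_mul hB hC (abs_nonneg _) ((abs_nonneg _).trans hB)

theorem pow_max_le_two_mul_abs_pow_sub_pow {R : ℝ} (hR : 2 ≤ R) {m n : ℕ} (hmn : m ≠ n) :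
    R ^ max m n ≤ 2 * |R ^ m - R ^ n| := by
  wlog hlt : m < n generalizing m n
  · rw [max_comm, abs_sub_comm]
    exact this hmn.symm (hmn.lt_or_gt.resolve_left hlt)
  have hle : 2 * R ^ m ≤ R ^ n :=
    calc 2 * R ^ m ≤ R * R ^ m := by gcongr
      _ = R ^ (m + 1) := by ring
      _ ≤ R ^ n := pow_le_pow_right₀ (by linarith) hlt
  have hm : 0 ≤ R ^ m := pow_nonneg (by linarith) m
  rw [max_eq_right hlt.le, abs_sub_comm, abs_of_nonneg (by linarith)]
  linarith

theorem not_mul_mul_le_of_one_lt {A x y : ℝ} (hA : 1 < A) (hx : 0 < x) (hy : 0 < y) :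
    ¬ A * x * (A * y) ≤ x * y := by
  have : 1 * (x * y) < A * A * (x * y) := mul_lt_mul_of_pos_right (by nlinarith) (by positivity)
  linarith

theorem exists_fin_eq_add_two_or_add_three_and_ne {d i j : ℕ} (hij : i ≠ j) (hi : i + 3 < d) :
    ∃ k : Fin d, ((k : ℕ) = i + 2 ∨ (k : ℕ) = i + 3) ∧ (k : ℕ) ≠ j + 2 ∧ (k : ℕ) ≠ j + 3 :=
  ⟨⟨if i = j + 1 then i + 3 else i + 2, by split_ifs <;> omega⟩, by dsimp only; split_ifs <;> omega⟩

section bigBox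

variable {d : ℕ} {p : EuclideanSpace ℝ (Fin d)} {R : ℝ}

theorem qpt_apply (m i : ℕ) (k : Fin d) :
    qpt d p R m i k = p k + if (k : ℕ) = i + 2 then (10 * d + 1) * R ^ m else 0 := by
  by_cases h : i + 2 < d
  · have : (k = ⟨i + 2, h⟩) ↔ (k : ℕ) = i + 2 := Fin.ext_iff
    simp [qpt, stdv, h, this]
  · have : (k : ℕ) ≠ i + 2 := by omega
    simp [qpt, stdv, h, this]

theorem abs_sub_apply_sub_le_of_mem_bigBox {m n i j : ℕ} {x y : EuclideanSpace ℝ (Fin d)}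
    (hx : x ∈ bigBox d p R m i) (hy : y ∈ bigBox d p R n j) (k : Fin d) :
    |x k - y k - ((if (k : ℕ) = i + 2 then (10 * d + 1) * R ^ m else 0) -
      (if (k : ℕ) = j + 2 then (10 * d + 1) * R ^ n else 0))| ≤ R ^ m / 2 + R ^ n / 2 := by
  have hxk := hx k
  have hyk := hy k
  rw [qpt_apply] at hxk hyk
  calc _ = |(x k - (p k + if (k : ℕ) = i + 2 then (10 * d + 1) * R ^ m else 0)) -
        (y k - (p k + if (k : ℕ) = j + 2 then (10 * d + 1) * R ^ n else 0))| := by ring_nf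
    _ ≤ _ := (abs_sub _ _).trans (add_le_add hxk hyk)

variable {m i : ℕ} {a b : EuclideanSpace ℝ (Fin d)}

theorem le_abs_sub_apply_of_mem_bigBox_succ (ha : a ∈ bigBox d p R m i)
    (hb : b ∈ bigBox d p R m (i + 1)) {k : Fin d} (hk : (k : ℕ) = i + 2 ∨ (k : ℕ) = i + 3) :
    10 * d * R ^ m ≤ |a k - b k| := by
  have h := abs_sub_apply_sub_le_of_mem_bigBox ha hb k
  rcases hk with hk | hk
  · rw [if_pos hk, if_neg (by omega)] at h
    linarith [abs_le.mp h, le_abs_self (a k - b k)]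
  · rw [if_neg (by omega), if_pos (by omega)] at h
    linarith [abs_le.mp h, neg_abs_le (a k - b k)]

theorem abs_sub_apply_le_of_mem_bigBox_succ (ha : a ∈ bigBox d p R m i)
    (hb : b ∈ bigBox d p R m (i + 1)) {k : Fin d} (hk₂ : (k : ℕ) ≠ i + 2)
    (hk₃ : (k : ℕ) ≠ i + 3) : |a k - b k| ≤ R ^ m := by
  have h := abs_sub_apply_sub_le_of_mem_bigBox ha hb k
  rw [if_neg hk₂, if_neg (by omega), sub_zero, sub_zero, add_halves] at h
  exact h

variable {n : ℕ}

theorem le_abs_sub_apply_of_mem_bigBox_of_ne (hR : 2 ≤ R) (hmn : m ≠ n)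
    (ha : a ∈ bigBox d p R m i) (hb : b ∈ bigBox d p R n i) {k : Fin d} (hk : (k : ℕ) = i + 2) :
    (5 * d - 1) * R ^ max m n ≤ |a k - b k| := by
  have h := abs_sub_apply_sub_le_of_mem_bigBox ha hb k
  rw [if_pos hk, if_pos hk, ← mul_sub] at h
  have hgap := pow_max_le_two_mul_abs_pow_sub_pow hR hmn
  have hm : R ^ m ≤ R ^ max m n := pow_le_pow_right₀ (by linarith) (le_max_left m n)
  have hn : R ^ n ≤ R ^ max m n := pow_le_pow_right₀ (by linarith) (le_max_right m n)
  have hcenter : |(10 * d + 1 : ℝ) * (R ^ m - R ^ n)| - |a k - b k| ≤ R ^ m / 2 + R ^ n / 2 := by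
    rw [abs_sub_comm] at h
    exact (abs_sub_abs_le_abs_sub _ _).trans h
  rw [abs_mul, abs_of_pos (by positivity : (0 : ℝ) < 10 * d + 1)] at hcenter
  have := mul_le_mul_of_nonneg_left hgap (by positivity : (0 : ℝ) ≤ 10 * d + 1)
  linarith [pow_nonneg (by linarith : (0 : ℝ) ≤ R) (max m n)]

theorem abs_sub_apply_le_of_mem_bigBox_of_ne (hR : 1 ≤ R)
    (ha : a ∈ bigBox d p R m i) (hb : b ∈ bigBox d p R n i) {k : Fin d} (hk : (k : ℕ) ≠ i + 2) :
    |a k - b k| ≤ R ^ max m n := by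
  have h := abs_sub_apply_sub_le_of_mem_bigBox ha hb k
  rw [if_neg hk, if_neg hk, sub_zero, sub_zero] at h
  have hm : R ^ m ≤ R ^ max m n := pow_le_pow_right₀ hR (le_max_left m n)
  have hn : R ^ n ≤ R ^ max m n := pow_le_pow_right₀ hR (le_max_right m n)
  linarith

variable {L : Set (EuclideanSpace ℝ (Fin d))}

theorem not_meets_and_meets_bigBox_of_index_ne (hL : IsLine L) (hR : 0 < R) {j : ℕ}
    (hij : i ≠ j) (hi : i + 3 < d) (hj : j + 3 < d) :
    ¬ (meets L (bigBox d p R m i) (bigBox d p R m (i + 1)) ∧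
       meets L (bigBox d p R n j) (bigBox d p R n (j + 1))) := by
  rintro ⟨⟨⟨a, haL, ha⟩, b, hbL, hb⟩, ⟨c, hcL, hc⟩, e, heL, he⟩
  obtain ⟨k, hk, hkj₂, hkj₃⟩ := exists_fin_eq_add_two_or_add_three_and_ne hij hi
  obtain ⟨k', hk', hki₂, hki₃⟩ := exists_fin_eq_add_two_or_add_three_and_ne hij.symm hj
  have hd : (1 : ℝ) ≤ d := by exact_mod_cast (by omega : 1 ≤ d)
  exact not_mul_mul_le_of_one_lt (by linarith) (pow_pos hR m) (pow_pos hR n) <|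
    hL.mul_le_mul_of_abs_sub haL hbL hcL heL
      (le_abs_sub_apply_of_mem_bigBox_succ ha hb hk)
      (abs_sub_apply_le_of_mem_bigBox_succ ha hb hki₂ hki₃)
      (abs_sub_apply_le_of_mem_bigBox_succ hc he hkj₂ hkj₃)
      (le_abs_sub_apply_of_mem_bigBox_succ hc he hk') (by positivity)

theorem not_meets_and_meets_bigBox_of_scale_ne (hL : IsLine L) (hR : 2 ≤ R) (hmn : m ≠ n)
    (hi : i + 3 < d) :
    ¬ (meets L (bigBox d p R m i) (bigBox d p R m (i + 1)) ∧
       meets L (bigBox d p R n i) (bigBox d p R n (i + 1))) := by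
  rintro ⟨⟨⟨a, haL, ha⟩, b, hbL, hb⟩, ⟨c, hcL, hc⟩, e, heL, he⟩
  let k : Fin d := ⟨i + 2, by omega⟩
  let k' : Fin d := ⟨i + 3, hi⟩
  have hd : (1 : ℝ) ≤ d := by exact_mod_cast (by omega : 1 ≤ d)
  have hM : 0 < R ^ max m n := by positivity
  exact not_mul_mul_le_of_one_lt (by linarith) hM hM <|
    hL.mul_le_mul_of_abs_sub haL hcL hbL heL
      (le_abs_sub_apply_of_mem_bigBox_of_ne hR hmn ha hc (k := k) rfl)
      (abs_sub_apply_le_of_mem_bigBox_of_ne (by linarith) ha hc (k := k') (by simp [k']))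
      (abs_sub_apply_le_of_mem_bigBox_of_ne (by linarith) hb he (k := k) (by simp [k]))
      (le_abs_sub_apply_of_mem_bigBox_of_ne hR hmn hb he (k := k') rfl)
      (mul_nonneg (by linarith) hM.le)

end bigBox

theorem stmt11_general (d : ℕ) :
    ∃ R₀ : ℝ, ∀ p : EuclideanSpace ℝ (Fin d),
      coordNat p 0 = 0 → coordNat p 1 = 0 →
      ∀ R : ℝ, R₀ ≤ R → (∀ i : Fin d, 2 * |p i| ≤ R) →
      ∀ m n i j : ℕ, 1 ≤ m → 1 ≤ n → 1 ≤ i → i ≤ d - 4 → 1 ≤ j → j ≤ d - 4 →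
        (m, i) ≠ (n, j) →
      ∀ L : Set (EuclideanSpace ℝ (Fin d)), IsLine L →
        ¬ (meets L (bigBox d p R m i) (bigBox d p R m (i + 1)) ∧
           meets L (bigBox d p R n j) (bigBox d p R n (j + 1))) := by
  refine ⟨2, fun p _ _ R hR _ m n i j _ _ hi₁ hi hj₁ hj hne L hL => ?_⟩
  rcases eq_or_ne i j with rfl | hij
  · exact not_meets_and_meets_bigBox_of_scale_ne hL hR (fun h => hne (h ▸ rfl)) (by omega)
  · exact not_meets_and_meets_bigBox_of_index_ne hL (by linarith) hij (by omega) (by omega)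

theorem stmt11 (d : ℕ) (hd : 5 ≤ d) :
    ∃ R₀ : ℝ, ∀ p : EuclideanSpace ℝ (Fin d),
      coordNat p 0 = 0 → coordNat p 1 = 0 →
      ∀ R : ℝ, R₀ ≤ R → (∀ i : Fin d, 2 * |p i| ≤ R) →
      ∀ m n i j : ℕ, 1 ≤ m → 1 ≤ n → 1 ≤ i → i ≤ d - 4 → 1 ≤ j → j ≤ d - 4 →
        (m, i) ≠ (n, j) →
      ∀ L : Set (EuclideanSpace ℝ (Fin d)), IsLine L →
        ¬ (meets L (bigBox d p R m i) (bigBox d p R m (i + 1)) ∧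
           meets L (bigBox d p R n j) (bigBox d p R n (j + 1))) :=
  stmt11_general d
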